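/- For every k ≥ 1, the normal subgroup L_k is already generated as a normal subgroup by the diagonal elements together with the high-index z's: L_k equals the normal closure in Γ of the set {w_{i,i,k} : i ≥ 1} ∪ {z_{m,n} : m ≥ 2^k, n ≥ 1}. (Equation (3.4) of the paper.) -/

import Mathlib

/-!
The elements `z_{a+1,b+1}` lie in the elementary abelian 2-group `Z`, so `X^a Y^b ↦ z_{a+1,b+1}`
extends to an additive map `φ : 𝔽₂[X,Y] → Z`. Conjugation by `x` acts on its image as
multiplication by `(1 + X)(1 + Y)`, so `[-, x]` acts as multiplication by `P = X + Y + XY`, and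
`w_{a+1,b+1,k} = φ (X^(a+1) Y^b S)` with `S = ∑_{t<n} (XY)^t P^(n-1-t)`, `n = 2^k - 1`.
As `z_{m,n} = z_{n,m}⁻¹` and `z_{m,m} = 1`, `φ` kills symmetric polynomials. It therefore suffices
that an additive subgroup of `𝔽₂[X,Y]` containing the symmetric polynomials, the monomials
`X^a Y^b` with `a ≥ n`, and the diagonal `X^(a+1) Y^a S` contains every `X^a Y^b S`. This follows
by induction on `a - b`, first for `P^n X^a Y^b` and then for `X^a Y^b S`, from
`(X + Y) S = P^n - (XY)^n`, from Frobenius `P^(2^k) = X^(2^k) + Y^(2^k) + (XY)^(2^k)`, and from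
`P^n = X^n + Y E - XY S` with the symmetric `E = ∑_{i<n} X^i Y^(n-1-i)`; the last identity is
obtained by cancelling `X + Y` in the domain `𝔽₂[X,Y]`.
-/

namespace Paper

variable {G : Type*} [Group G]

/-- The paper's commutator `[a,b] = a⁻¹ b⁻¹ a b`. -/
def pc {G : Type*} [Group G] (a b : G) : G := a⁻¹ * b⁻¹ * a * b

/-- The left-normed iterated commutator `[a, x, (r)…, x]`. -/
def itc {G : Type*} [Group G] (x a : G) : ℕ → G
  | 0 => a
  | r + 1 => pc (itc x a r) x

/-- `c_i`, where `c_1 = y` and `c_{i+1} = [c_i, x]`; equivalently `c_i = [y, x, (i-1)…, x]`. -/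
def cc (x y : G) (i : ℕ) : G := itc x y (i - 1)

/-- `z_{m,n} = [c_m, c_n]`. -/
def zz (x y : G) (m n : ℕ) : G := pc (cc x y m) (cc x y n)

/-- `H = ⟨c_i : i ≥ 1⟩`. -/
def Hsub (x y : G) : Subgroup G :=
  Subgroup.closure {g | ∃ i, 1 ≤ i ∧ g = cc x y i}

/-- `Z = ⟨c_l², z_{m,n} : l, m, n ≥ 1⟩`. -/
def Zsub (x y : G) : Subgroup G :=
  Subgroup.closure ({g | ∃ l, 1 ≤ l ∧ g = cc x y l ^ 2} ∪
    {g | ∃ m n, 1 ≤ m ∧ 1 ≤ n ∧ g = zz x y m n})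

/-- `w_{i,j,k} = ∏_{t=1}^{2^k−1} [z_{i+t,j+t−1}, x, (2^k−1−t)…, x]`,
factors in order of increasing `t` (reindexed by `t ↦ t+1`). -/
def ww (x y : G) (i j k : ℕ) : G :=
  ((List.range (2 ^ k - 1)).map
    (fun t => itc x (zz x y (i + t + 1) (j + t)) (2 ^ k - 2 - t))).prod

/-- `L_k`, the normal closure of `{w_{i,j,k} : i,j ≥ 1} ∪ {z_{m,n} : m ≥ 2^k, n ≥ 1}`. -/
def Lsub (x y : G) (k : ℕ) : Subgroup G :=
  Subgroup.normalClosure ({g | ∃ i j, 1 ≤ i ∧ 1 ≤ j ∧ g = ww x y i j k} ∪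
    {g | ∃ m n, 2 ^ k ≤ m ∧ 1 ≤ n ∧ g = zz x y m n})

/-- `Q_k = ⟨c_l² : l ≥ 2^{k−1}⟩`. -/
def Qsub (x y : G) (k : ℕ) : Subgroup G :=
  Subgroup.closure {g | ∃ l, 2 ^ (k - 1) ≤ l ∧ g = cc x y l ^ 2}

/-- `d_k(h) = [h,x,(2^k−1)…,x]⁻¹ · x^{−2^k} · (xh)^{2^k}`. -/
def dd (x y : G) (k : ℕ) (h : G) : G :=
  (itc x h (2 ^ k - 1))⁻¹ * (x ^ 2 ^ k)⁻¹ * (x * h) ^ 2 ^ k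

/-- `Γ^{2^k} = ⟨g^{2^k} : g ∈ Γ⟩`. -/
def pow2Sub (G : Type*) [Group G] (k : ℕ) : Subgroup G :=
  Subgroup.closure {g | ∃ a : G, g = a ^ 2 ^ k}

/-- `ζ(h₁,h₂) = ∏_{ℓ=0}^{2^k−2} [h₁^x, x, (ℓ)…, x, h₂, x, (2^k−2−ℓ)…, x]`,
factors in order of increasing `ℓ`. -/
def zeta (x : G) (k : ℕ) (h₁ h₂ : G) : G :=
  ((List.range (2 ^ k - 1)).map
    (fun l => itc x (pc (itc x (x⁻¹ * h₁ * x) l) h₂) (2 ^ k - 2 - l))).prod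

section Commutators

lemma pc_mul_left (a b c : G) : pc (a * b) c = b⁻¹ * pc a c * b * pc b c := by
  simp only [pc]; group

lemma pc_mul_right (a c d : G) : pc a (c * d) = pc a d * (d⁻¹ * pc a c * d) := by
  simp only [pc]; group

lemma conj_pc (x a b : G) : x⁻¹ * pc a b * x = pc (x⁻¹ * a * x) (x⁻¹ * b * x) := by
  simp only [pc]; group

lemma pc_inv (a b : G) : (pc a b)⁻¹ = pc b a := by
  simp only [pc]; group

lemma pc_self (a : G) : pc a a = 1 := by
  simp only [pc]; group

end Commutators

theorem _root_.Nat.forall_forall_of_gap_induction {p : ℕ → ℕ → Prop}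
    (symm : ∀ i j, p i j → p j i)
    (diag : ∀ j, p j j) (succ_diag : ∀ j, p (j + 1) j)
    (step : ∀ i j, p i (j + 1) → p (i + 1) (j + 1) → p (i + 1) j) (i j : ℕ) : p i j := by
  have key : ∀ d j, p (j + d) j ∧ p (j + d + 1) j := by
    intro d
    induction d with
    | zero => exact fun j => ⟨diag j, succ_diag j⟩
    | succ d ih =>
      refine fun j => ⟨(ih j).2, step _ _ ?_ ?_⟩
      · simpa [Nat.add_right_comm, Nat.add_assoc] using (ih (j + 1)).1
      · simpa [Nat.add_right_comm, Nat.add_assoc] using (ih (j + 1)).2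
  rcases le_total j i with h | h
  · simpa [Nat.add_sub_cancel' h] using (key (i - j) j).1
  · exact symm _ _ (by simpa [Nat.add_sub_cancel' h] using (key (j - i) i).1)

abbrev F2XY := AddMonoidAlgebra (ZMod 2) (ℕ × ℕ)

namespace F2XY
open AddMonoidAlgebra Finset

instance : CharP F2XY 2 := charP_of_injective_algebraMap' (ZMod 2) 2

noncomputable def X : F2XY := single (1, 0) 1
noncomputable def Y : F2XY := single (0, 1) 1

lemma single_one_eq_X_pow_mul_Y_pow (a b : ℕ) : single (a, b) (1 : ZMod 2) = X ^ a * Y ^ b := by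
  simp [X, Y, single_pow, single_mul_single]

lemma X_add_Y_ne_zero : X + Y ≠ 0 := by
  intro h
  simpa [X, Y] using congrArg (fun p : F2XY => p.coeff (1, 0)) h

noncomputable def swap : F2XY →+* F2XY :=
  mapDomainRingHom (ZMod 2) (AddEquiv.prodComm : ℕ × ℕ ≃+ ℕ × ℕ).toAddMonoidHom

lemma swap_single (a b : ℕ) (r : ZMod 2) : swap (single (a, b) r) = single (b, a) r := by
  simp [swap]

@[simp] lemma swap_X : swap X = Y := swap_single 1 0 1
@[simp] lemma swap_Y : swap Y = X := swap_single 0 1 1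

lemma swap_swap (p : F2XY) : swap (swap p) = p := by
  induction p using AddMonoidAlgebra.induction_linear with
  | zero => simp
  | add p q hp hq => simp [hp, hq]
  | single d r => rw [swap_single, swap_single]

noncomputable def P : F2XY := X + Y + X * Y

noncomputable def S (n : ℕ) : F2XY := ∑ i ∈ range n, (X * Y) ^ i * P ^ (n - 1 - i)

noncomputable def E (n : ℕ) : F2XY := ∑ i ∈ range n, X ^ i * Y ^ (n - 1 - i)

@[simp] lemma swap_P : swap P = P := by simp [P]; ring

@[simp] lemma swap_S (n : ℕ) : swap (S n) = S n := by
  simp only [S, map_sum, map_mul, map_pow, swap_X, swap_Y, swap_P, mul_comm Y X]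

@[simp] lemma swap_E (n : ℕ) : swap (E n) = E n := by
  rw [E, RingHom.map_geom_sum₂, swap_X, swap_Y, geom_sum₂_comm]

lemma X_add_Y_mul_S (n : ℕ) : (X + Y) * S n = P ^ n - (X * Y) ^ n := by
  have h : S n * (X * Y - P) = (X * Y) ^ n - P ^ n := geom_sum₂_mul _ _ _
  have hP : P = X + Y + X * Y := rfl
  linear_combination -h - S n * hP

lemma S_succ (n : ℕ) : S (n + 1) = P ^ n + X * Y * S n := by
  rw [S, geom_sum₂_comm, Nat.add_sub_cancel, S, geom_sum₂_comm]
  exact geom_sum₂_succ_eq P (X * Y)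

lemma E_succ (n : ℕ) : E (n + 1) = X ^ n + Y * E n := by
  rw [E, Nat.add_sub_cancel]
  exact geom_sum₂_succ_eq X Y

lemma P_pow_two_pow (k : ℕ) : P ^ 2 ^ k = X ^ 2 ^ k + Y ^ 2 ^ k + (X * Y) ^ 2 ^ k := by
  rw [P, add_pow_char_pow, add_pow_char_pow]

lemma S_two_pow (k : ℕ) : S (2 ^ k) = E (2 ^ k) := by
  have hE : E (2 ^ k) * (X + Y) = X ^ 2 ^ k + Y ^ 2 ^ k := by
    have h := geom_sum₂_mul X Y (2 ^ k)
    rwa [CharTwo.sub_eq_add, CharTwo.sub_eq_add] at h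
  refine mul_left_cancel₀ X_add_Y_ne_zero ?_
  rw [X_add_Y_mul_S, P_pow_two_pow, mul_comm _ (E _), hE]
  ring

lemma P_pow_eq {n k : ℕ} (hn : n + 1 = 2 ^ k) : P ^ n = X ^ n + Y * E n - X * Y * S n := by
  have h := S_two_pow k
  rw [← hn, S_succ, E_succ] at h
  linear_combination h

lemma induction_on_monomial {motive : F2XY → Prop} (p : F2XY) (zero : motive 0)
    (add : ∀ p q, motive p → motive q → motive (p + q)) (monomial : ∀ a b, motive (X ^ a * Y ^ b)) :
    motive p := by
  induction p using AddMonoidAlgebra.induction_linear with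
  | zero => exact zero
  | add p q hp hq => exact add p q hp hq
  | single d r =>
    obtain ⟨a, b⟩ := d
    obtain rfl | rfl : r = 0 ∨ r = 1 := by revert r; decide
    · rw [single_zero]; exact zero
    · rw [single_one_eq_X_pow_mul_Y_pow]; exact monomial a b

section Lift

variable {A : Type*} [AddCommGroup A] [Module (ZMod 2) A]

noncomputable def lift (f : ℕ × ℕ → A) : F2XY →ₗ[ZMod 2] A :=
  (AddMonoidAlgebra.basis (ℕ × ℕ) (ZMod 2)).constr (ZMod 2) f

lemma lift_single (f : ℕ × ℕ → A) (d : ℕ × ℕ) (r : ZMod 2) : lift f (single d r) = r • f d := by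
  rw [← mul_one r, ← smul_single', map_smul, lift, ← AddMonoidAlgebra.basis_apply,
    Module.Basis.constr_basis, mul_one]

lemma lift_X_pow_mul_Y_pow (f : ℕ × ℕ → A) (a b : ℕ) : lift f (X ^ a * Y ^ b) = f (a, b) := by
  rw [← single_one_eq_X_pow_mul_Y_pow, lift_single, one_smul]

lemma lift_swap (f : ℕ × ℕ → A) (p : F2XY) : lift f (swap p) = lift (f ∘ Prod.swap) p := by
  induction p using AddMonoidAlgebra.induction_linear with
  | zero => simp
  | add p q hp hq => simp [hp, hq]
  | single d r => obtain ⟨a, b⟩ := d; simp [swap_single, lift_single]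

lemma lift_eq_zero_of_swap_eq {f : ℕ × ℕ → A} (hf : ∀ a b, f (b, a) = f (a, b))
    (hdiag : ∀ a, f (a, a) = 0) {p : F2XY} (hp : swap p = p) : lift f p = 0 := by
  -- `f = g + g ∘ swap` for the strictly upper triangular part `g` of `f`, and on a symmetric `p`
  -- both summands evaluate to `lift g p`
  set g : ℕ × ℕ → A := fun d => if d.1 < d.2 then f d else 0
  have hfg : f = g + g ∘ Prod.swap := by
    funext ⟨a, b⟩
    rcases lt_trichotomy a b with h | rfl | h
    · simp [g, h, h.not_gt]
    · simp [g, hdiag]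
    · simp [g, h, h.not_gt, hf]
  rw [hfg, lift, map_add, LinearMap.add_apply, ← lift, ← lift, ← lift_swap, hp,
    ZModModule.add_self]

end Lift

section Membership

variable {W : AddSubgroup F2XY} {n : ℕ}
  (symm_mem : ∀ p, swap p = p → p ∈ W) (high_mem : ∀ a b, n ≤ a → X ^ a * Y ^ b ∈ W)

include symm_mem

lemma swap_mem {p : F2XY} (hp : p ∈ W) : swap p ∈ W := by
  have h : swap (p + swap p) = p + swap p := by rw [map_add, swap_swap, add_comm]
  simpa using W.sub_mem (symm_mem _ h) hp

include high_mem

lemma X_pow_mul_Y_pow_mem {a b : ℕ} (h : n ≤ a ∨ n ≤ b) : X ^ a * Y ^ b ∈ W := by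
  rcases h with h | h
  · exact high_mem a b h
  · simpa [mul_comm] using swap_mem symm_mem (high_mem b a h)

variable {k : ℕ} (hn : n + 1 = 2 ^ k) (gen_mem : ∀ a, X ^ (a + 1) * Y ^ a * S n ∈ W)
include hn gen_mem

lemma P_pow_mul_mem (a b : ℕ) : P ^ n * (X ^ a * Y ^ b) ∈ W := by
  have hP : P ^ n * (X + Y + X * Y) = X ^ 2 ^ k + Y ^ 2 ^ k + (X * Y) ^ 2 ^ k := by
    rw [← P_pow_two_pow, ← hn, pow_succ]; rfl
  have high : ∀ {a b}, n ≤ a ∨ n ≤ b → X ^ a * Y ^ b ∈ W := X_pow_mul_Y_pow_mem symm_mem high_mem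
  induction a, b using Nat.forall_forall_of_gap_induction with
  | symm i j h => simpa [mul_comm] using swap_mem symm_mem h
  | diag j => exact symm_mem _ (by simp [mul_comm])
  | succ_diag j =>
    have e : P ^ n * (X ^ (j + 1) * Y ^ j) = X ^ (j + 1 + n) * Y ^ j + (X * Y) ^ (j + 1) * E n
        - X ^ (j + 1 + 1) * Y ^ (j + 1) * S n := by
      rw [P_pow_eq hn]; ring
    rw [e]
    refine W.sub_mem (W.add_mem (high (by omega)) (symm_mem _ ?_)) (gen_mem (j + 1))
    simp [mul_comm]
  | step i j h₁ h₂ =>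
    have e : P ^ n * (X ^ (i + 1) * Y ^ j) = X ^ (2 ^ k + i) * Y ^ j + X ^ i * Y ^ (2 ^ k + j)
        + X ^ (2 ^ k + i) * Y ^ (2 ^ k + j) - P ^ n * (X ^ i * Y ^ (j + 1))
        - P ^ n * (X ^ (i + 1) * Y ^ (j + 1)) := by
      linear_combination X ^ i * Y ^ j * hP
    rw [e]
    refine W.sub_mem (W.sub_mem (W.add_mem (W.add_mem ?_ ?_) ?_) h₁) h₂ <;> exact high (by omega)

theorem X_pow_mul_Y_pow_mul_S_mem (a b : ℕ) : X ^ a * Y ^ b * S n ∈ W := by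
  have high : ∀ {a b}, n ≤ a ∨ n ≤ b → X ^ a * Y ^ b ∈ W := X_pow_mul_Y_pow_mem symm_mem high_mem
  induction a, b using Nat.forall_forall_of_gap_induction with
  | symm i j h => simpa [mul_comm] using swap_mem symm_mem h
  | diag j => exact symm_mem _ (by simp [mul_comm])
  | succ_diag j => exact gen_mem j
  | step i j h _ =>
    have e : X ^ (i + 1) * Y ^ j * S n =
        P ^ n * (X ^ i * Y ^ j) - X ^ (i + n) * Y ^ (j + n) - X ^ i * Y ^ (j + 1) * S n := by
      linear_combination X ^ i * Y ^ j * X_add_Y_mul_S n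
    rw [e]
    exact W.sub_mem (W.sub_mem (P_pow_mul_mem symm_mem high_mem hn gen_mem i j) (high (by omega))) h

end Membership

end F2XY

section Generators

variable (x y : G)

lemma cc_succ (i : ℕ) : cc x y (i + 2) = pc (cc x y (i + 1)) x := rfl

lemma conj_cc (i : ℕ) : x⁻¹ * cc x y (i + 1) * x = cc x y (i + 1) * cc x y (i + 2) := by
  rw [cc_succ, pc]; group

lemma cc_mem_Hsub (i : ℕ) : cc x y (i + 1) ∈ Hsub x y :=
  Subgroup.subset_closure ⟨i + 1, by omega, rfl⟩

lemma zz_mem_Zsub (m n : ℕ) : zz x y (m + 1) (n + 1) ∈ Zsub x y :=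
  Subgroup.subset_closure (Or.inr ⟨m + 1, n + 1, by omega, by omega, rfl⟩)

lemma Zsub_le_Hsub : Zsub x y ≤ Hsub x y := by
  rw [Zsub, Subgroup.closure_le]
  rintro g (⟨l, hl, rfl⟩ | ⟨m, n, hm, hn, rfl⟩)
  · obtain ⟨l, rfl⟩ := Nat.exists_eq_add_of_le' hl
    exact pow_mem (cc_mem_Hsub x y l) 2
  · obtain ⟨m, rfl⟩ := Nat.exists_eq_add_of_le' hm
    obtain ⟨n, rfl⟩ := Nat.exists_eq_add_of_le' hn
    have hm := cc_mem_Hsub x y m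
    have hn := cc_mem_Hsub x y n
    exact mul_mem (mul_mem (mul_mem (inv_mem hm) (inv_mem hn)) hm) hn

lemma conj_zz (hca : ∀ z ∈ Zsub x y, ∀ h ∈ Hsub x y, z * h = h * z) (a b : ℕ) :
    x⁻¹ * zz x y (a + 1) (b + 1) * x =
      zz x y (a + 1) (b + 2) * zz x y (a + 1) (b + 1) *
        (zz x y (a + 2) (b + 2) * zz x y (a + 2) (b + 1)) := by
  have conj_of_comm {z h : G} (hz : z ∈ Zsub x y) (hh : h ∈ Hsub x y) : h⁻¹ * z * h = z := by
    rw [mul_assoc, hca z hz h hh, inv_mul_cancel_left]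
  have hzz (m n : ℕ) : pc (cc x y m) (cc x y n) = zz x y m n := rfl
  rw [zz, conj_pc, conj_cc, conj_cc, pc_mul_left, pc_mul_right, pc_mul_right]
  simp only [hzz]
  rw [conj_of_comm (zz_mem_Zsub x y a b) (cc_mem_Hsub x y (b + 1)),
    conj_of_comm (zz_mem_Zsub x y (a + 1) b) (cc_mem_Hsub x y (b + 1)),
    conj_of_comm (mul_mem (zz_mem_Zsub x y a (b + 1)) (zz_mem_Zsub x y a b))
      (cc_mem_Hsub x y (a + 1))]

end Generators

section Evaluation

open F2XY

variable (x y : G) (hca : ∀ z ∈ Zsub x y, ∀ h ∈ Hsub x y, z * h = h * z)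
  (hz2 : ∀ z ∈ Zsub x y, z ^ 2 = 1)

abbrev Zsub.commGroup : CommGroup (Zsub x y) where
  mul_comm a b := Subtype.ext (hca a a.2 b (Zsub_le_Hsub x y b.2))

abbrev Zsub.module :
    letI := Zsub.commGroup x y hca
    Module (ZMod 2) (Additive (Zsub x y)) :=
  letI := Zsub.commGroup x y hca
  AddCommGroup.zmodModule fun a => Subtype.ext (hz2 _ a.toMul.2)

def zGen (d : ℕ × ℕ) : Additive (Zsub x y) :=
  Additive.ofMul ⟨zz x y (d.1 + 1) (d.2 + 1), zz_mem_Zsub x y d.1 d.2⟩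

noncomputable def zEval (p : F2XY) : G :=
  letI := Zsub.commGroup x y hca
  letI := Zsub.module x y hca hz2
  (lift (zGen x y) p).toMul

local notation "φ" => zEval x y hca hz2

include hca hz2

lemma zEval_add (p q : F2XY) : φ (p + q) = φ p * φ q := by
  simp [zEval]

lemma zEval_zero : φ 0 = 1 :=
  (mul_eq_left (a := φ 0)).mp (by rw [← zEval_add, add_zero])

lemma zEval_X_pow_mul_Y_pow (a b : ℕ) : φ (X ^ a * Y ^ b) = zz x y (a + 1) (b + 1) := by
  simp [zEval, lift_X_pow_mul_Y_pow, zGen]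

lemma zEval_inv (p : F2XY) : (φ p)⁻¹ = φ p :=
  inv_eq_of_mul_eq_one_right (by rw [← zEval_add, CharTwo.add_self_eq_zero, zEval_zero])

lemma zEval_eq_one_of_swap_eq {p : F2XY} (hp : swap p = p) : φ p = 1 := by
  let := Zsub.commGroup x y hca
  let := Zsub.module x y hca hz2
  have hswap (a b : ℕ) : zGen x y (b, a) = zGen x y (a, b) := by
    refine congrArg Additive.ofMul (Subtype.ext ?_)
    change zz x y (b + 1) (a + 1) = zz x y (a + 1) (b + 1)
    rw [zz, ← pc_inv, ← zz, ← zEval_X_pow_mul_Y_pow x y hca hz2, zEval_inv]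
  have hdiag (a : ℕ) : zGen x y (a, a) = 0 :=
    congrArg Additive.ofMul (Subtype.ext (pc_self _))
  rw [zEval, lift_eq_zero_of_swap_eq hswap hdiag hp]
  rfl

lemma conj_zEval (p : F2XY) : x⁻¹ * φ p * x = φ ((1 + P) * p) := by
  induction p using induction_on_monomial with
  | zero => rw [mul_zero, zEval_zero]; group
  | add p q hp hq => rw [mul_add, zEval_add, zEval_add, ← hp, ← hq]; group
  | monomial a b =>
    have e : (1 + P) * (X ^ a * Y ^ b) = X ^ a * Y ^ (b + 1) + X ^ a * Y ^ b +
        (X ^ (a + 1) * Y ^ (b + 1) + X ^ (a + 1) * Y ^ b) := by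
      rw [P]; ring
    simp only [e, zEval_add, zEval_X_pow_mul_Y_pow]
    exact conj_zz x y hca a b

lemma pc_zEval (p : F2XY) : pc (φ p) x = φ (P * p) :=
  calc pc (φ p) x = (φ p)⁻¹ * (x⁻¹ * φ p * x) := by rw [pc]; group
    _ = φ (p + (1 + P) * p) := by rw [zEval_inv, conj_zEval, zEval_add]
    _ = φ (P * p) := by congr 1; linear_combination CharTwo.add_self_eq_zero p

lemma itc_zEval (p : F2XY) (r : ℕ) : itc x (φ p) r = φ (P ^ r * p) := by
  induction r with
  | zero => rw [itc, pow_zero, one_mul]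
  | succ r ih => rw [itc, ih, pc_zEval, pow_succ', mul_assoc]

lemma list_prod_zEval (n : ℕ) (F : ℕ → F2XY) :
    ((List.range n).map fun t => φ (F t)).prod = φ (∑ t ∈ Finset.range n, F t) := by
  induction n with
  | zero => simp [zEval_zero]
  | succ n ih =>
    simp [List.range_succ, ih, Finset.sum_range_succ, zEval_add]

lemma ww_eq_zEval (a b k : ℕ) :
    ww x y (a + 1) (b + 1) k = φ (X ^ (a + 1) * Y ^ b * S (2 ^ k - 1)) := by
  rw [ww, S, Finset.mul_sum, ← list_prod_zEval]
  refine congrArg List.prod (List.map_congr_left fun t _ => ?_)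
  rw [show b + 1 + t = b + t + 1 by omega, ← zEval_X_pow_mul_Y_pow x y hca hz2, itc_zEval,
    show 2 ^ k - 1 - 1 - t = 2 ^ k - 2 - t by omega]
  congr 1
  ring

def zEvalComap (N : Subgroup G) : AddSubgroup F2XY where
  carrier := {p | φ p ∈ N}
  add_mem' {p q} hp hq := by
    change φ (p + q) ∈ N
    rw [zEval_add]
    exact N.mul_mem hp hq
  zero_mem' := by
    change φ 0 ∈ N
    rw [zEval_zero]
    exact N.one_mem
  neg_mem' {p} hp := by
    change φ (-p) ∈ N
    rwa [CharTwo.neg_eq]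

lemma mem_zEvalComap {N : Subgroup G} {p : F2XY} : p ∈ zEvalComap x y hca hz2 N ↔ φ p ∈ N :=
  Iff.rfl

theorem ww_mem {N : Subgroup G} {k : ℕ} (hdiag : ∀ i, 1 ≤ i → ww x y i i k ∈ N)
    (hhigh : ∀ m n, 2 ^ k ≤ m → 1 ≤ n → zz x y m n ∈ N) {i j : ℕ} (hi : 1 ≤ i) (hj : 1 ≤ j) :
    ww x y i j k ∈ N := by
  obtain ⟨a, rfl⟩ := Nat.exists_eq_add_of_le' hi
  obtain ⟨b, rfl⟩ := Nat.exists_eq_add_of_le' hj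
  rw [ww_eq_zEval x y hca hz2]
  refine X_pow_mul_Y_pow_mul_S_mem (W := zEvalComap x y hca hz2 N) (fun p hp => ?_)
    (fun a b ha => ?_) (Nat.sub_add_cancel Nat.one_le_two_pow) (fun a => ?_) (a + 1) b
  · rw [mem_zEvalComap, zEval_eq_one_of_swap_eq x y hca hz2 hp]
    exact N.one_mem
  · rw [mem_zEvalComap, zEval_X_pow_mul_Y_pow x y hca hz2]
    exact hhigh _ _ (by omega) (by omega)
  · rw [mem_zEvalComap, ← ww_eq_zEval x y hca hz2]
    exact hdiag _ (by omega)

end Evaluation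

theorem Lk_diagonal_generation_general (x y : G)
    (hca : ∀ z ∈ Zsub x y, ∀ h ∈ Hsub x y, z * h = h * z)
    (hz2 : ∀ z ∈ Zsub x y, z ^ 2 = 1)
    (k : ℕ) :
    Lsub x y k =
      Subgroup.normalClosure ({g | ∃ i, 1 ≤ i ∧ g = ww x y i i k} ∪
        {g | ∃ m n, 2 ^ k ≤ m ∧ 1 ≤ n ∧ g = zz x y m n}) := by
  refine le_antisymm (Subgroup.normalClosure_le_normal ?_)
    (Subgroup.normalClosure_mono (Set.union_subset_union_left _ ?_))
  · rintro g (⟨i, j, hi, hj, rfl⟩ | hz)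
    · exact ww_mem x y hca hz2
        (fun i hi => Subgroup.subset_normalClosure (Or.inl ⟨i, hi, rfl⟩))
        (fun m n hm hn => Subgroup.subset_normalClosure (Or.inr ⟨m, n, hm, hn, rfl⟩)) hi hj
    · exact Subgroup.subset_normalClosure (Or.inr hz)
  · rintro g ⟨i, hi, rfl⟩
    exact ⟨i, i, hi, hi, rfl⟩

theorem Lk_diagonal_generation (x y : G)
    (hca : ∀ z ∈ Zsub x y, ∀ h ∈ Hsub x y, z * h = h * z)
    (hz2 : ∀ z ∈ Zsub x y, z ^ 2 = 1)
    (k : ℕ) (hk : 1 ≤ k) :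
    Lsub x y k =
      Subgroup.normalClosure ({g | ∃ i, 1 ≤ i ∧ g = ww x y i i k} ∪
        {g | ∃ m n, 2 ^ k ≤ m ∧ 1 ≤ n ∧ g = zz x y m n}) :=
  Lk_diagonal_generation_general x y hca hz2 k

end Paper
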